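/- arXiv:0811.3500 — 3 statements merged into one kernel-verified Lean document; each statement's English description precedes it below -/
import Mathlib

section
/- Let φ be a sequence of pivots applicable to a simple graph G and let S = sup(φ) be its support. Then det(G[S]) = 1 over GF(2). -/
set_option linter.unusedSectionVars false

variable {V : Type*} [Fintype V] [DecidableEq V]

/-- Local complementation at a vertex `w`: complement the edges within `N_G(w)`. -/
def SimpleGraph.localComp (G : SimpleGraph V) (w : V) : SimpleGraph V where
  Adj x y := x ≠ y ∧ Xor' (G.Adj x y) (G.Adj x w ∧ G.Adj y w)
  symm := by
    constructor
    intro x y ⟨hne, hx⟩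
    refine ⟨hne.symm, ?_⟩
    have h1 := G.adj_comm x y
    unfold Xor' Xor at hx ⊢
    tauto
  loopless := by constructor; intro x ⟨h, _⟩; exact h rfl

/-- `x ∼_G y` : `x = y` or `{x,y}` is an edge of `G`. -/
def SimpleGraph.nbr (G : SimpleGraph V) (x y : V) : Prop := x = y ∨ G.Adj x y

theorem SimpleGraph.nbr_comm (G : SimpleGraph V) (x y : V) : G.nbr x y ↔ G.nbr y x :=
  or_congr eq_comm (G.adj_comm x y)

private theorem xor_swap_right (a b c : Prop) : Xor' (Xor' a b) c ↔ Xor' (Xor' a c) b := by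
  unfold Xor' Xor; tauto

/-- The pivot `G[uv]` of `G` on an edge `{u,v}`, characterized by
`x ∼_{G[uv]} y ⟺ (x ∼_G y) XOR ((x ∼_G u) ∧ (y ∼_G v)) XOR ((x ∼_G v) ∧ (y ∼_G u))`. -/
def SimpleGraph.pivot (G : SimpleGraph V) (u v : V) : SimpleGraph V where
  Adj x y := x ≠ y ∧
    Xor' (Xor' (G.nbr x y) (G.nbr x u ∧ G.nbr y v)) (G.nbr x v ∧ G.nbr y u)
  symm := by
    constructor
    intro x y ⟨hne, hx⟩
    refine ⟨hne.symm, ?_⟩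
    show Xor' (Xor' (G.nbr y x) (G.nbr y u ∧ G.nbr x v)) (G.nbr y v ∧ G.nbr x u)
    rw [G.nbr_comm y x, and_comm (a := G.nbr y u) (b := G.nbr x v),
      and_comm (a := G.nbr y v) (b := G.nbr x u)]
    exact (xor_swap_right _ _ _).mp hx
  loopless := by constructor; intro x ⟨h, _⟩; exact h rfl

/-- Determinant over GF(2) of the adjacency matrix of the subgraph of `G` induced by `S`. -/
noncomputable def gdet (G : SimpleGraph V) (S : Finset V) : ZMod 2 := by
  classical
  exact Matrix.det (Matrix.of fun i j : S => if G.Adj i j then (1 : ZMod 2) else 0)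

/-- Apply a sequence of pivots (left to right). -/
def applyPivots (G : SimpleGraph V) : List (V × V) → SimpleGraph V
  | [] => G
  | p :: φ => applyPivots (G.pivot p.1 p.2) φ

/-- A sequence of pivots is applicable when each pair is an edge of the graph
obtained by applying all preceding pivots. -/
def PivotsApplicable (G : SimpleGraph V) : List (V × V) → Prop
  | [] => True
  | p :: φ => G.Adj p.1 p.2 ∧ PivotsApplicable (G.pivot p.1 p.2) φ

/-- The support of a sequence of pivots: vertices occurring an odd number of times. -/
def pivotSupport (φ : List (V × V)) : Finset V :=
  Finset.univ.filter fun x => Odd ((φ.flatMap fun p => [p.1, p.2]).count x)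

/-- A sequence of pivots is reduced if its pivot vertices are pairwise distinct. -/
def ReducedSeq (φ : List (V × V)) : Prop := (φ.flatMap fun p => [p.1, p.2]).Nodup

/-- The number of perfect matchings of the subgraph of `G` induced by `S`:
sets of edges of `G` inside `S` such that every vertex of `S` lies in exactly one of them. -/
noncomputable def pmCount (G : SimpleGraph V) (S : Finset V) : ℕ := by
  classical
  exact (Finset.univ.filter fun P : Finset (Sym2 V) =>
    (∀ e ∈ P, e ∈ G.edgeSet ∧ ∀ v ∈ e, v ∈ S) ∧
    ∀ v ∈ S, ∃! e, e ∈ P ∧ v ∈ e).card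

/-!
Over GF(2) a pivot on an edge `uv` acts on principal minors by
`det G[uv][Y] = det G[Y ∆ {u,v}]`. Write `Z = Y \ {u,v}`: the `Z`-block of the pivoted adjacency
matrix is that of `G` plus the symmetric rank-two update `a bᵀ + b aᵀ`, where `a`, `b` are the
columns of `u`, `v`. If `{u,v}` lies in `Y` or in `Y ∆ {u,v}`, the `{u,v}`-block is
`!![0, 1; 1, 0]`, whose Schur complement is exactly this update; if only one of `u`, `v` is
involved, an elementary block factorization absorbs it. As each pivot changes the support by
`∆ {u,v}`, induction along `φ` reduces the theorem to the empty minor.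
-/

open Matrix

namespace Matrix

theorem submatrix_sumElim {α m n ι : Type*} (A : Matrix ι ι α) (f : m → ι) (g : n → ι) :
    A.submatrix (Sum.elim f g) (Sum.elim f g) =
      fromBlocks (A.submatrix f f) (A.submatrix f g) (A.submatrix g f) (A.submatrix g g) := by
  ext (i | i) (j | j) <;> rfl

variable {n R : Type*} [Fintype n] [DecidableEq n] [CommRing R]

theorem det_fromBlocks_swap₂₂ (M : Matrix n n R) (a b : n → R) :
    det (fromBlocks M (of ![a, b])ᵀ (of ![a, b]) !![0, 1; 1, 0]) =
      -det (M - vecMulVec a b - vecMulVec b a) := by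
  have hJ : !![(0 : R), 1; 1, 0] * !![0, 1; 1, 0] = 1 := by
    ext i j; fin_cases i <;> fin_cases j <;> simp
  have := invertibleOfRightInverse _ _ hJ
  have hSchur : (of ![a, b])ᵀ * ⅟!![(0 : R), 1; 1, 0] * of ![a, b] =
      vecMulVec a b + vecMulVec b a := by
    rw [invOf_eq_right_inv hJ]
    ext x y
    simp only [mul_apply, transpose_apply, of_apply, cons_val', cons_val_fin_one, Fin.sum_univ_two,
      cons_val_zero, cons_val_one, mul_zero, mul_one, zero_add, add_zero, Matrix.add_apply,
      vecMulVec_apply]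
    ring
  rw [det_fromBlocks₂₂, hSchur, det_fin_two_of, sub_add_eq_sub_sub]
  ring

theorem det_fromBlocks_add_vecMulVec (M : Matrix n n R) (a b : n → R) :
    det (fromBlocks (M + vecMulVec a b + vecMulVec b a) (replicateCol Unit b)
      (replicateRow Unit b) 0) =
      det (fromBlocks M (replicateCol Unit b) (replicateRow Unit b) 0) := by
  have hfactor : fromBlocks (M + vecMulVec a b + vecMulVec b a) (replicateCol Unit b)
      (replicateRow Unit b) 0 =
      fromBlocks 1 (replicateCol Unit a) 0 1 *
        fromBlocks M (replicateCol Unit b) (replicateRow Unit b) 0 *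
        fromBlocks 1 0 (replicateRow Unit a) 1 := by
    simp [fromBlocks_multiply, vecMulVec_eq Unit]
  rw [hfactor, det_mul, det_mul, det_fromBlocks_zero₂₁, det_fromBlocks_zero₁₂]
  simp

end Matrix

open scoped Classical

namespace SimpleGraph

variable {G : SimpleGraph V} {u v x y : V}

theorem pivot_adj_iff : (G.pivot u v).Adj x y ↔
    x ≠ y ∧ Xor (Xor (G.nbr x y) (G.nbr x u ∧ G.nbr y v)) (G.nbr x v ∧ G.nbr y u) := Iff.rfl

theorem pivot_adj_left_right : (G.pivot u v).Adj u v ↔ u ≠ v := by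
  simp only [pivot_adj_iff, nbr, G.adj_comm v u]
  grind

theorem pivot_adj_of_ne (hx : x ≠ u ∧ x ≠ v) (hy : y ≠ u ∧ y ≠ v) :
    (G.pivot u v).Adj x y ↔
      x ≠ y ∧ Xor (Xor (G.Adj x y) (G.Adj x u ∧ G.Adj y v)) (G.Adj x v ∧ G.Adj y u) := by
  rcases eq_or_ne x y with rfl | hxy
  · simp
  · simp [pivot_adj_iff, nbr, hxy, hx, hy]

theorem adjMatrix_pivot_apply_of_ne (hx : x ≠ u ∧ x ≠ v) (hy : y ≠ u ∧ y ≠ v) :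
    (G.pivot u v).adjMatrix (ZMod 2) x y = G.adjMatrix (ZMod 2) x y +
      G.adjMatrix (ZMod 2) x u * G.adjMatrix (ZMod 2) y v +
      G.adjMatrix (ZMod 2) x v * G.adjMatrix (ZMod 2) y u := by
  rcases eq_or_ne x y with rfl | hxy
  · simp [mul_comm, ZModModule.add_self]
  · simp only [adjMatrix_apply, pivot_adj_of_ne hx hy]
    by_cases G.Adj x y <;> by_cases G.Adj x u <;> by_cases G.Adj y v <;> by_cases G.Adj x v <;>
      by_cases G.Adj y u <;> simp_all <;> decide

variable {Z : Finset V}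

theorem adjMatrix_pivot_submatrix (hu : u ∉ Z) (hv : v ∉ Z) :
    ((G.pivot u v).adjMatrix (ZMod 2)).submatrix ((↑) : Z → V) (↑) =
      (G.adjMatrix (ZMod 2)).submatrix (↑) (↑) +
        vecMulVec (fun x : Z => G.adjMatrix (ZMod 2) x u) (fun x : Z => G.adjMatrix (ZMod 2) x v) +
        vecMulVec (fun x : Z => G.adjMatrix (ZMod 2) x v)
          (fun x : Z => G.adjMatrix (ZMod 2) x u) := by
  ext x y
  rw [submatrix_apply, adjMatrix_pivot_apply_of_ne
    ⟨ne_of_mem_of_not_mem x.2 hu, ne_of_mem_of_not_mem x.2 hv⟩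
    ⟨ne_of_mem_of_not_mem y.2 hu, ne_of_mem_of_not_mem y.2 hv⟩]
  rfl

theorem adjMatrix_pivot_col_left (h : G.Adj u v) (hu : u ∉ Z) (hv : v ∉ Z) :
    (fun x : Z => (G.pivot u v).adjMatrix (ZMod 2) x u) =
      fun x : Z => G.adjMatrix (ZMod 2) x v := by
  ext x
  refine if_congr ?_ rfl rfl
  simp only [pivot_adj_iff, nbr, ne_of_mem_of_not_mem x.2 hu, ne_of_mem_of_not_mem x.2 hv, h]
  grind

theorem adjMatrix_pivot_col_right (h : G.Adj u v) (hu : u ∉ Z) (hv : v ∉ Z) :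
    (fun x : Z => (G.pivot u v).adjMatrix (ZMod 2) x v) =
      fun x : Z => G.adjMatrix (ZMod 2) x u := by
  ext x
  refine if_congr ?_ rfl rfl
  simp only [pivot_adj_iff, nbr, ne_of_mem_of_not_mem x.2 hu, ne_of_mem_of_not_mem x.2 hv, h.symm]
  grind

end SimpleGraph

section gdet

variable {G : SimpleGraph V} {u v : V} {Z : Finset V}

theorem gdet_eq_det_submatrix (G : SimpleGraph V) (S : Finset V) :
    gdet G S = det ((G.adjMatrix (ZMod 2)).submatrix ((↑) : S → V) (↑)) := rfl

theorem gdet_empty (G : SimpleGraph V) : gdet G ∅ = 1 := by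
  rw [gdet_eq_det_submatrix]
  exact det_isEmpty

theorem gdet_eq_det_submatrix_of_injective {ι : Type*} [Fintype ι] [DecidableEq ι]
    (G : SimpleGraph V) {S : Finset V} (f : ι → V) (hf : f.Injective) (hS : Set.range f = S) :
    gdet G S = det ((G.adjMatrix (ZMod 2)).submatrix f f) := by
  have hmem (i : ι) : f i ∈ S := by rw [← Finset.mem_coe, ← hS]; exact ⟨i, rfl⟩
  have hsurj (x : S) : ∃ i, f i = x := by rw [← Set.mem_range, hS]; exact x.2
  let e : ι ≃ S := Equiv.ofBijective (fun i => ⟨f i, hmem i⟩)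
    ⟨fun i j hij => hf congr(($hij).1), fun x => (hsurj x).imp fun _ => Subtype.ext⟩
  rw [gdet_eq_det_submatrix, ← det_submatrix_equiv_self e]
  rfl

theorem gdet_insert (G : SimpleGraph V) {w : V} (hw : w ∉ Z) :
    gdet G (insert w Z) = det (fromBlocks ((G.adjMatrix (ZMod 2)).submatrix ((↑) : Z → V) (↑))
      (replicateCol Unit fun x : Z => G.adjMatrix (ZMod 2) x w)
      (replicateRow Unit fun x : Z => G.adjMatrix (ZMod 2) x w) 0) := by
  have hf : (Sum.elim ((↑) : Z → V) fun _ : Unit => w).Injective :=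
    Subtype.val_injective.sumElim (fun _ _ _ => rfl) fun x _ h => hw (h ▸ x.2)
  rw [gdet_eq_det_submatrix_of_injective G _ hf (by simp), submatrix_sumElim]
  congr 2
  · ext x; simp [SimpleGraph.adjMatrix_apply, G.adj_comm]
  · ext; simp

theorem gdet_insert_insert (G : SimpleGraph V) (h : G.Adj u v) (hu : u ∉ Z) (hv : v ∉ Z) :
    gdet G (insert u (insert v Z)) =
      det (fromBlocks ((G.adjMatrix (ZMod 2)).submatrix ((↑) : Z → V) (↑))
        (of ![fun x : Z => G.adjMatrix (ZMod 2) x u, fun x : Z => G.adjMatrix (ZMod 2) x v])ᵀ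
        (of ![fun x : Z => G.adjMatrix (ZMod 2) x u, fun x : Z => G.adjMatrix (ZMod 2) x v])
        !![0, 1; 1, 0]) := by
  have huv : ![u, v].Injective := by
    intro i j; fin_cases i <;> fin_cases j <;> simp [h.ne, h.ne.symm]
  have hf : (Sum.elim ((↑) : Z → V) ![u, v]).Injective :=
    Subtype.val_injective.sumElim huv fun x i hxi => by
      have := x.2
      fin_cases i <;> simp_all
  rw [gdet_eq_det_submatrix_of_injective G _ hf (by simp [Set.insert_comm]), submatrix_sumElim]
  congr 2
  · ext x i; fin_cases i <;> rfl
  · ext i x; fin_cases i <;> simp [SimpleGraph.adjMatrix_apply, G.adj_comm]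
  · ext i j; fin_cases i <;> fin_cases j <;> simp [h, h.symm]

theorem gdet_pivot_of_notMem (h : G.Adj u v) (hu : u ∉ Z) (hv : v ∉ Z) :
    gdet (G.pivot u v) Z = gdet G (insert u (insert v Z)) := by
  rw [gdet_insert_insert G h hu hv, det_fromBlocks_swap₂₂, gdet_eq_det_submatrix,
    G.adjMatrix_pivot_submatrix hu hv, ZModModule.neg_eq_self, ZModModule.sub_eq_add,
    ZModModule.sub_eq_add]

theorem gdet_pivot_insert_insert (h : G.Adj u v) (hu : u ∉ Z) (hv : v ∉ Z) :
    gdet (G.pivot u v) (insert u (insert v Z)) = gdet G Z := by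
  rw [gdet_insert_insert _ (SimpleGraph.pivot_adj_left_right.2 h.ne) hu hv,
    G.adjMatrix_pivot_col_left h hu hv, G.adjMatrix_pivot_col_right h hu hv,
    G.adjMatrix_pivot_submatrix hu hv, det_fromBlocks_swap₂₂, ZModModule.neg_eq_self,
    gdet_eq_det_submatrix]
  congr 1
  abel

theorem gdet_pivot_insert_left (h : G.Adj u v) (hu : u ∉ Z) (hv : v ∉ Z) :
    gdet (G.pivot u v) (insert u Z) = gdet G (insert v Z) := by
  rw [gdet_insert _ hu, gdet_insert _ hv, G.adjMatrix_pivot_col_left h hu hv,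
    G.adjMatrix_pivot_submatrix hu hv, det_fromBlocks_add_vecMulVec]

theorem gdet_pivot_insert_right (h : G.Adj u v) (hu : u ∉ Z) (hv : v ∉ Z) :
    gdet (G.pivot u v) (insert v Z) = gdet G (insert u Z) := by
  rw [gdet_insert _ hv, gdet_insert _ hu, G.adjMatrix_pivot_col_right h hu hv,
    G.adjMatrix_pivot_submatrix hu hv, add_right_comm, det_fromBlocks_add_vecMulVec]

theorem gdet_pivot (h : G.Adj u v) (Y : Finset V) :
    gdet (G.pivot u v) Y = gdet G (symmDiff Y {u, v}) := by
  set Z := Y \ {u, v}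
  have hu : u ∉ Z := by simp [Z]
  have hv : v ∉ Z := by simp [Z]
  by_cases huY : u ∈ Y <;> by_cases hvY : v ∈ Y
  · rw [show Y = insert u (insert v Z) by ext; simp [Z]; grind,
      show symmDiff (insert u (insert v Z)) {u, v} = Z by ext; simp [Finset.mem_symmDiff]; grind]
    exact gdet_pivot_insert_insert h hu hv
  · rw [show Y = insert u Z by ext; simp [Z]; grind,
      show symmDiff (insert u Z) {u, v} = insert v Z by ext; simp [Finset.mem_symmDiff]; grind]
    exact gdet_pivot_insert_left h hu hv
  · rw [show Y = insert v Z by ext; simp [Z]; grind,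
      show symmDiff (insert v Z) {u, v} = insert u Z by ext; simp [Finset.mem_symmDiff]; grind]
    exact gdet_pivot_insert_right h hu hv
  · rw [show Y = Z by ext; simp [Z]; grind,
      show symmDiff Z {u, v} = insert u (insert v Z) by ext; simp [Finset.mem_symmDiff]; grind]
    exact gdet_pivot_of_notMem h hu hv

end gdet

theorem pivotSupport_nil : pivotSupport ([] : List (V × V)) = ∅ := by
  simp [pivotSupport]

theorem pivotSupport_cons (p : V × V) (φ : List (V × V)) (hp : p.1 ≠ p.2) :
    pivotSupport (p :: φ) = symmDiff (pivotSupport φ) {p.1, p.2} := by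
  ext x
  simp only [pivotSupport, Finset.mem_filter, Finset.mem_univ, true_and, Finset.mem_symmDiff,
    List.flatMap_cons, List.count_append, List.count_cons, List.count_nil, Finset.mem_insert,
    Finset.mem_singleton, Nat.odd_iff]
  by_cases h1 : x = p.1 <;> by_cases h2 : x = p.2 <;> simp [h1, h2, hp, Ne.symm] <;> omega

/-- If `φ` is applicable to `G` with support `S`, then `det(G[S]) = 1`. -/
theorem gdet_support_eq_one (G : SimpleGraph V) (φ : List (V × V))
    (h : PivotsApplicable G φ) :
    gdet G (pivotSupport φ) = 1 := by
  induction φ generalizing G with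
  | nil => rw [pivotSupport_nil, gdet_empty]
  | cons p φ ih =>
    obtain ⟨hp, hφ⟩ := h
    rw [pivotSupport_cons p φ hp.ne, ← gdet_pivot hp]
    exact ih _ hφ
end

section
/- Let u, v, w, z be four distinct vertices of a simple graph G such that the sequence [uv][wz] is applicable to G (i.e. {u,v} ∈ E(G) and {w,z} ∈ E(G[uv])). Then at least one of the sequences [wz][uv], [vz][uw], [uz][vw] is applicable to G. -/
set_option linter.unusedSectionVars false

variable {V : Type*} [Fintype V] [DecidableEq V]

theorem SimpleGraph.pivot_adj_of_ne_s16 (G : SimpleGraph V) {u v x y : V} (hxy : x ≠ y)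
    (hxu : x ≠ u) (hxv : x ≠ v) (hyu : y ≠ u) (hyv : y ≠ v) :
    (G.pivot u v).Adj x y ↔
      Xor (Xor (G.Adj x y) (G.Adj x u ∧ G.Adj y v)) (G.Adj x v ∧ G.Adj y u) := by
  simp only [pivot, nbr, hxy, hxu, hxv, hyu, hyv, false_or, ne_eq, not_false_eq_true, true_and]
  rfl

/-- if `[uv][wz]` is applicable to `G` for four distinct vertices, then
at least one of `[wz][uv]`, `[vz][uw]`, `[uz][vw]` is applicable to `G`. -/
theorem exists_applicable_rearrangement (G : SimpleGraph V) (u v w z : V)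
    (hd : [u, v, w, z].Nodup) (h1 : G.Adj u v) (h2 : (G.pivot u v).Adj w z) :
    (G.Adj w z ∧ (G.pivot w z).Adj u v) ∨
    (G.Adj v z ∧ (G.pivot v z).Adj u w) ∨
    (G.Adj u z ∧ (G.pivot u z).Adj v w) := by
  obtain ⟨⟨huv, huw, huz⟩, ⟨hvw, hvz⟩, hwz⟩ :
      (u ≠ v ∧ u ≠ w ∧ u ≠ z) ∧ (v ≠ w ∧ v ≠ z) ∧ w ≠ z := by simpa using hd
  rw [G.pivot_adj_of_ne_s16 hwz huw.symm hvw.symm huz.symm hvz.symm] at h2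
  rw [G.pivot_adj_of_ne_s16 huv huw huz hvw hvz, G.pivot_adj_of_ne_s16 huw huv huz hvw.symm hwz,
    G.pivot_adj_of_ne_s16 hvw huv.symm hvz huw.symm hwz]
  simp only [G.adj_comm w u, G.adj_comm z v, G.adj_comm w v, G.adj_comm z u, Xor, h1,
    true_and] at h2 ⊢
  -- With p := uw ∧ vz and q := uz ∧ vw, `h2` reads wz ⊕ p ⊕ q: if wz is an edge then p = q,
  -- otherwise exactly one of p, q holds, and it supplies the edge of the matching rearrangement.
  by_cases hwz' : G.Adj w z
  · exact Or.inl ⟨hwz', by tauto⟩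
  by_cases hp : G.Adj u w ∧ G.Adj v z
  · exact Or.inr <| Or.inl ⟨hp.2, by tauto⟩
  · exact Or.inr <| Or.inr ⟨by tauto, by tauto⟩
end

section
/- Let V be a finite set, let A be a symmetric V × V matrix over GF(2) (a graph with loops), and let S ⊆ V. Then det(A[S]) = 1 if and only if there exists a sequence φ of operations applicable to A, each operation being either a local complementation *u at a looped vertex or a pivot [uv] at an edge between two distinct loop-free vertices, with sup(φ) = S (and in that case φ can be chosen so that no vertex occurs more than once in it). -/
/-!
Over GF(2), if a principal block `A[T]` squares to the identity, then it is its own inverse and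
has determinant `1`, so the Schur complement formula reads
`det A[T ∪ U] = det (A[U] + A[U,T] A[T] A[T,U])`.
For `T = {u}` with a loop at `u`, and for `T = {u, v}` an edge between loop-free vertices of a
symmetric matrix, the matrix on the right is exactly `(A*u)[U]`, resp. `(A[uv])[U]`. So each
operation removes its vertices from `S` without changing `det A[S]`, and both directions follow by
induction; for the forward one, a nonzero determinant on a nonempty `S` forces a nonzero entry of
`A[S]`: a loop, or else an edge between two loop-free vertices.
-/

set_option linter.unusedSectionVars false

variable {V : Type*} [Fintype V] [DecidableEq V]

/-- Principal submatrix with rows and columns indexed by `S`. -/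
def psub (A : Matrix V V (ZMod 2)) (S : Finset V) : Matrix S S (ZMod 2) :=
  A.submatrix (fun i : S => (i : V)) (fun j : S => (j : V))

/-- Local complementation at a looped vertex `u` of a graph with loops,
identified with its symmetric adjacency matrix over GF(2):
`(A*u)_{xy} = A_{xy} + A_{xu}·A_{uy}` for `x, y ≠ u`, entries in row/column `u` unchanged. -/
def matLC (A : Matrix V V (ZMod 2)) (u : V) : Matrix V V (ZMod 2) :=
  fun x y => if x = u ∨ y = u then A x y else A x y + A x u * A u y

/-- `s_A(x,y)` : `x = y` or `A_{xy} = 1`. -/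
def matNbr (A : Matrix V V (ZMod 2)) (x y : V) : Prop := x = y ∨ A x y = 1

/-- Pivot `A[uv]` on an edge `{u,v}` between two loop-free vertices of a graph with loops:
same diagonal as `A`, and for `x ≠ y`,
`(A[uv])_{xy} = A_{xy} XOR (s_A(x,u) ∧ s_A(y,v)) XOR (s_A(x,v) ∧ s_A(y,u))`. -/
noncomputable def matPivotEdge (A : Matrix V V (ZMod 2)) (u v : V) : Matrix V V (ZMod 2) := by
  classical
  exact fun x y =>
    if x = y then A x y
    else A x y + (if matNbr A x u ∧ matNbr A y v then 1 else 0)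
               + (if matNbr A x v ∧ matNbr A y u then 1 else 0)

/-- Apply a sequence of mixed operations (left to right): `Sum.inl u` is the local
complementation `*u`, `Sum.inr (u,v)` is the pivot `[uv]`. -/
noncomputable def applyOps (A : Matrix V V (ZMod 2)) : List (V ⊕ V × V) → Matrix V V (ZMod 2)
  | [] => A
  | (Sum.inl u) :: φ => applyOps (matLC A u) φ
  | (Sum.inr p) :: φ => applyOps (matPivotEdge A p.1 p.2) φ

/-- A mixed sequence is applicable when each operation's defining condition holds in the
matrix obtained by applying all preceding operations: `*u` needs a loop at `u`, and `[uv]`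
needs `u ≠ v`, both loop-free, and `A_{uv} = 1`. -/
def OpsApplicable (A : Matrix V V (ZMod 2)) : List (V ⊕ V × V) → Prop
  | [] => True
  | (Sum.inl u) :: φ => A u u = 1 ∧ OpsApplicable (matLC A u) φ
  | (Sum.inr p) :: φ => p.1 ≠ p.2 ∧ A p.1 p.1 = 0 ∧ A p.2 p.2 = 0 ∧ A p.1 p.2 = 1 ∧
      OpsApplicable (matPivotEdge A p.1 p.2) φ

/-- The list of vertex occurrences of a mixed sequence: `*u` contributes one occurrence
of `u`, `[uv]` one occurrence each of `u` and `v`. -/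
def opsVertices (φ : List (V ⊕ V × V)) : List V :=
  φ.flatMap fun o => match o with | Sum.inl u => [u] | Sum.inr p => [p.1, p.2]

/-- The support of a mixed sequence: vertices occurring an odd number of times. -/
def opsSupport (φ : List (V ⊕ V × V)) : Finset V :=
  Finset.univ.filter fun x => Odd ((opsVertices φ).count x)

def Matrix.finsetSubmatrix {α R : Type*} (A : Matrix α α R) (T U : Finset α) : Matrix T U R :=
  A.submatrix (↑) (↑)

theorem Matrix.det_finsetSubmatrix_union {α R : Type*} [CommRing R] [DecidableEq α]
    (A : Matrix α α R) {T U : Finset α} (h : Disjoint T U) [Invertible (A.finsetSubmatrix T T)] :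
    (A.finsetSubmatrix (T ∪ U) (T ∪ U)).det = (A.finsetSubmatrix T T).det *
      (A.finsetSubmatrix U U -
        A.finsetSubmatrix U T * ⅟(A.finsetSubmatrix T T) * A.finsetSubmatrix T U).det := by
  rw [← det_submatrix_equiv_self (Equiv.Finset.union T U h), ← det_fromBlocks₁₁]
  congr 1
  ext (i | i) (j | j) <;> rfl

theorem zmod_two_ite_and_eq_mul (a b : ZMod 2) :
    (if a = 1 ∧ b = 1 then 1 else 0 : ZMod 2) = a * b := by
  revert a b; decide

theorem zmod_two_eq_one_of_ne_zero {a : ZMod 2} (h : a ≠ 0) : a = 1 := by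
  revert a; decide

theorem finsetSubmatrix_mul_psub_mul_finsetSubmatrix_apply (A : Matrix V V (ZMod 2))
    (T U : Finset V) (x y : U) :
    (A.finsetSubmatrix U T * psub A T * A.finsetSubmatrix T U) x y =
      ∑ t ∈ T, ∑ t' ∈ T, A x t * A t t' * A t' y := by
  simp only [Matrix.mul_apply, Finset.sum_mul, psub, Matrix.finsetSubmatrix, Matrix.submatrix_apply]
  rw [Finset.sum_comm]
  exact Finset.sum_coe_sort T _ |>.trans (Finset.sum_congr rfl fun t _ =>
    Finset.sum_coe_sort T (fun t' => A x t * A t t' * A t' y))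

theorem det_psub_union_of_mul_self_eq_one (A : Matrix V V (ZMod 2)) {T U : Finset V}
    (h : Disjoint T U) (hT : psub A T * psub A T = 1) :
    (psub A (T ∪ U)).det =
      (psub A U - A.finsetSubmatrix U T * psub A T * A.finsetSubmatrix T U).det := by
  let _ : Invertible (A.finsetSubmatrix T T) := ⟨psub A T, hT, hT⟩
  have hdet : (psub A T).det = 1 := by
    have := congrArg Matrix.det hT
    rwa [Matrix.det_mul, Matrix.det_one, ← sq, ZMod.pow_card] at this
  exact (Matrix.det_finsetSubmatrix_union A h).trans ((congrArg (· * _) hdet).trans (one_mul _))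

theorem psub_singleton_mul_self {A : Matrix V V (ZMod 2)} {u : V} (huu : A u u = 1) :
    psub A {u} * psub A {u} = 1 := by
  ext ⟨x, hx⟩ ⟨y, hy⟩
  rw [Finset.mem_singleton] at hx hy
  subst hx hy
  simp [Matrix.mul_apply, psub, huu]

theorem psub_pair_mul_self {A : Matrix V V (ZMod 2)} {u v : V} (huv : u ≠ v)
    (huu : A u u = 0) (hvv : A v v = 0) (huv1 : A u v = 1) (hvu1 : A v u = 1) :
    psub A {u, v} * psub A {u, v} = 1 := by
  ext ⟨x, hx⟩ ⟨y, hy⟩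
  simp only [Matrix.mul_apply, psub, Matrix.submatrix_apply]
  rw [Finset.sum_coe_sort {u, v} (fun t => A x t * A t y), Finset.sum_pair huv]
  simp only [Finset.mem_insert, Finset.mem_singleton] at hx hy
  rcases hx with rfl | rfl <;> rcases hy with rfl | rfl <;>
    simp [huv, huv.symm, huu, hvv, huv1, hvu1]

theorem psub_matLC {A : Matrix V V (ZMod 2)} {u : V} {U : Finset V} (huu : A u u = 1)
    (hu : u ∉ U) :
    psub (matLC A u) U =
      psub A U - A.finsetSubmatrix U {u} * psub A {u} * A.finsetSubmatrix {u} U := by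
  ext x y
  have hx : (x : V) ≠ u := fun h => hu (h ▸ x.2)
  have hy : (y : V) ≠ u := fun h => hu (h ▸ y.2)
  rw [Matrix.sub_apply, finsetSubmatrix_mul_psub_mul_finsetSubmatrix_apply]
  simp [psub, matLC, hx, hy, huu, CharTwo.sub_eq_add]

theorem psub_matPivotEdge {A : Matrix V V (ZMod 2)} (hA : A.IsSymm) {u v : V} {U : Finset V}
    (huv : u ≠ v) (huu : A u u = 0) (hvv : A v v = 0) (he : A u v = 1) (hu : u ∉ U)
    (hv : v ∉ U) :
    psub (matPivotEdge A u v) U =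
      psub A U - A.finsetSubmatrix U {u, v} * psub A {u, v} * A.finsetSubmatrix {u, v} U := by
  ext x y
  have hxu : (x : V) ≠ u := fun h => hu (h ▸ x.2)
  have hyu : (y : V) ≠ u := fun h => hu (h ▸ y.2)
  have hxv : (x : V) ≠ v := fun h => hv (h ▸ x.2)
  have hyv : (y : V) ≠ v := fun h => hv (h ▸ y.2)
  rw [Matrix.sub_apply, finsetSubmatrix_mul_psub_mul_finsetSubmatrix_apply, Finset.sum_pair huv,
    Finset.sum_pair huv, Finset.sum_pair huv]
  simp only [psub, matPivotEdge, matNbr, Matrix.submatrix_apply, hxu, hyu, hxv, hyv, false_or,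
    zmod_two_ite_and_eq_mul, huu, hvv, CharTwo.sub_eq_add]
  rw [hA.apply (y : V) u, hA.apply (y : V) v, hA.apply u v, he]
  split_ifs with hxy
  · rw [hxy]
    ring_nf
    reduce_mod_char
  · ring

theorem det_psub_insert_eq_det_psub_matLC {A : Matrix V V (ZMod 2)} {u : V} {U : Finset V}
    (huu : A u u = 1) (hu : u ∉ U) :
    (psub A (insert u U)).det = (psub (matLC A u) U).det := by
  rw [Finset.insert_eq, det_psub_union_of_mul_self_eq_one A (Finset.disjoint_singleton_left.2 hu)
    (psub_singleton_mul_self huu), psub_matLC huu hu]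

theorem det_psub_insert_insert_eq_det_psub_matPivotEdge {A : Matrix V V (ZMod 2)}
    (hA : A.IsSymm) {u v : V} {U : Finset V} (huv : u ≠ v) (huu : A u u = 0) (hvv : A v v = 0)
    (he : A u v = 1) (hu : u ∉ U) (hv : v ∉ U) :
    (psub A (insert u (insert v U))).det = (psub (matPivotEdge A u v) U).det := by
  have hdisj : Disjoint {u, v} U :=
    Finset.disjoint_insert_left.2 ⟨hu, Finset.disjoint_singleton_left.2 hv⟩
  rw [Finset.insert_eq v, ← Finset.insert_union, det_psub_union_of_mul_self_eq_one A hdisj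
    (psub_pair_mul_self huv huu hvv he (hA.apply u v ▸ he)),
    psub_matPivotEdge hA huv huu hvv he hu hv]

theorem matLC_isSymm {A : Matrix V V (ZMod 2)} (hA : A.IsSymm) (u : V) : (matLC A u).IsSymm :=
  Matrix.IsSymm.ext fun x y => by
    simp only [matLC, or_comm, hA.apply x y, hA.apply u y, hA.apply x u, mul_comm]

theorem matPivotEdge_isSymm {A : Matrix V V (ZMod 2)} (hA : A.IsSymm) (u v : V) :
    (matPivotEdge A u v).IsSymm := by
  refine Matrix.IsSymm.ext fun x y => ?_
  by_cases hxy : x = y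
  · rw [hxy]
  · simp only [matPivotEdge, if_neg hxy, if_neg (Ne.symm hxy), hA.apply x y, add_assoc]
    congr 1
    rw [add_comm]
    congr 2 <;> exact propext and_comm

theorem exists_apply_ne_zero_of_det_psub_ne_zero {A : Matrix V V (ZMod 2)} {S : Finset V}
    (hS : S.Nonempty) (h : (psub A S).det ≠ 0) : ∃ x ∈ S, ∃ y ∈ S, A x y ≠ 0 := by
  by_contra! hzero
  have : Nonempty S := hS.to_subtype
  have hzero : psub A S = 0 := Matrix.ext fun x y => hzero x x.2 y y.2
  exact h (by rw [hzero, Matrix.det_zero])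

theorem exists_edge_of_det_psub_ne_zero {A : Matrix V V (ZMod 2)} {S : Finset V}
    (hS : S.Nonempty) (h : (psub A S).det ≠ 0) (hloopFree : ∀ w ∈ S, A w w = 0) :
    ∃ u ∈ S, ∃ v ∈ S, u ≠ v ∧ A u v = 1 := by
  obtain ⟨u, hu, v, hv, he⟩ := exists_apply_ne_zero_of_det_psub_ne_zero hS h
  refine ⟨u, hu, v, hv, ?_, zmod_two_eq_one_of_ne_zero he⟩
  rintro rfl
  exact he (hloopFree u hu)

@[simp]
theorem opsVertices_nil : opsVertices ([] : List (V ⊕ V × V)) = [] := rfl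

@[simp]
theorem opsVertices_cons_inl (u : V) (φ : List (V ⊕ V × V)) :
    opsVertices (Sum.inl u :: φ) = u :: opsVertices φ := rfl

@[simp]
theorem opsVertices_cons_inr (u v : V) (φ : List (V ⊕ V × V)) :
    opsVertices (Sum.inr (u, v) :: φ) = u :: v :: opsVertices φ := rfl

theorem opsSupport_eq_toFinset {φ : List (V ⊕ V × V)} (h : (opsVertices φ).Nodup) :
    opsSupport φ = (opsVertices φ).toFinset := by
  ext x
  simp only [opsSupport, Finset.mem_filter, Finset.mem_univ, true_and, List.mem_toFinset]
  by_cases hx : x ∈ opsVertices φ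
  · simp [hx, List.count_eq_one_of_mem h hx]
  · simp [hx, List.count_eq_zero.2 hx]

theorem det_psub_toFinset_opsVertices : ∀ {A : Matrix V V (ZMod 2)} (φ : List (V ⊕ V × V)),
    A.IsSymm → OpsApplicable A φ → (opsVertices φ).Nodup →
      (psub A (opsVertices φ).toFinset).det = 1
  | _, [], _, _, _ => by
    rw [opsVertices_nil, List.toFinset_nil]
    exact Matrix.det_isEmpty
  | A, Sum.inl u :: ψ, hA, ⟨huu, happ⟩, hnd => by
    rw [opsVertices_cons_inl, List.nodup_cons, ← List.mem_toFinset] at hnd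
    rw [opsVertices_cons_inl, List.toFinset_cons, det_psub_insert_eq_det_psub_matLC huu hnd.1]
    exact det_psub_toFinset_opsVertices ψ (matLC_isSymm hA u) happ hnd.2
  | A, Sum.inr (u, v) :: ψ, hA, ⟨huv, huu, hvv, he, happ⟩, hnd => by
    simp only [opsVertices_cons_inr, List.nodup_cons, List.mem_cons, not_or] at hnd
    obtain ⟨⟨-, hu⟩, hv, hnd⟩ := hnd
    rw [opsVertices_cons_inr, List.toFinset_cons, List.toFinset_cons,
      det_psub_insert_insert_eq_det_psub_matPivotEdge hA huv huu hvv he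
        (mt List.mem_toFinset.1 hu) (mt List.mem_toFinset.1 hv)]
    exact det_psub_toFinset_opsVertices ψ (matPivotEdge_isSymm hA u v) happ hnd

theorem exists_opsApplicable_of_det_psub_eq_one (S : Finset V) :
    ∀ {A : Matrix V V (ZMod 2)}, A.IsSymm → (psub A S).det = 1 →
      ∃ φ : List (V ⊕ V × V), OpsApplicable A φ ∧ (opsVertices φ).Nodup ∧
        (opsVertices φ).toFinset = S := by
  induction S using Finset.strongInduction with
  | H S ih =>
  intro A hA hdet
  rcases S.eq_empty_or_nonempty with rfl | hS
  · exact ⟨[], trivial, List.nodup_nil, rfl⟩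
  by_cases hloop : ∃ u ∈ S, A u u = 1
  · obtain ⟨u, hu, huu⟩ := hloop
    rw [← Finset.insert_erase hu, det_psub_insert_eq_det_psub_matLC huu
      (Finset.notMem_erase u S)] at hdet
    obtain ⟨ψ, happ, hnd, hψ⟩ := ih _ (Finset.erase_ssubset hu) (matLC_isSymm hA u) hdet
    refine ⟨Sum.inl u :: ψ, ⟨huu, happ⟩, ?_, ?_⟩
    · simp [hnd, ← List.mem_toFinset, hψ]
    · rw [opsVertices_cons_inl, List.toFinset_cons, hψ, Finset.insert_erase hu]
  have hloopFree : ∀ w ∈ S, A w w = 0 := fun w hw =>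
    by_contra fun h => hloop ⟨w, hw, zmod_two_eq_one_of_ne_zero h⟩
  obtain ⟨u, hu, v, hv, huv, he⟩ :=
    exists_edge_of_det_psub_ne_zero hS (hdet ▸ one_ne_zero) hloopFree
  set U := (S.erase u).erase v
  have hUS : U ⊂ S :=
    (Finset.erase_ssubset (Finset.mem_erase.2 ⟨huv.symm, hv⟩)).trans (Finset.erase_ssubset hu)
  have hS' : insert u (insert v U) = S := by
    rw [Finset.insert_erase (Finset.mem_erase.2 ⟨huv.symm, hv⟩), Finset.insert_erase hu]
  rw [← hS', det_psub_insert_insert_eq_det_psub_matPivotEdge hA huv (hloopFree u hu)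
    (hloopFree v hv) he (by simp [U, huv]) (by simp [U])] at hdet
  obtain ⟨ψ, happ, hnd, hψ⟩ := ih U hUS (matPivotEdge_isSymm hA u v) hdet
  refine ⟨Sum.inr (u, v) :: ψ, ⟨huv, hloopFree u hu, hloopFree v hv, he, happ⟩, ?_, ?_⟩
  · simp [hnd, ← List.mem_toFinset, hψ, huv, U]
  · rw [opsVertices_cons_inr, List.toFinset_cons, List.toFinset_cons, hψ, hS']

/-- `det(A[S]) = 1` iff there is an applicable mixed sequence of local
complementations and pivots with support `S` (which can be chosen with no vertex
occurring more than once). -/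
theorem det_eq_one_iff_exists_ops (A : Matrix V V (ZMod 2)) (hA : A.IsSymm) (S : Finset V) :
    (psub A S).det = 1 ↔
      ∃ φ : List (V ⊕ V × V), OpsApplicable A φ ∧ opsSupport φ = S ∧
        (opsVertices φ).Nodup := by
  constructor
  · intro hdet
    obtain ⟨φ, happ, hnd, hφ⟩ := exists_opsApplicable_of_det_psub_eq_one S hA hdet
    exact ⟨φ, happ, (opsSupport_eq_toFinset hnd).trans hφ, hnd⟩
  · rintro ⟨φ, happ, rfl, hnd⟩
    rw [opsSupport_eq_toFinset hnd]
    exact det_psub_toFinset_opsVertices φ hA happ hnd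
end
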